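/- arXiv:2401.12327 — 6 statements merged into one kernel-verified Lean document; each statement's English description precedes it below -/
import Mathlib

section
/- Let X be a connected metric space and f : X → X a continuous map with a compact global trapping region Q. Suppose the set NW(f) of non-wandering points of f is written as NW(f) = C₁ ∪ C₂ where C₁ and C₂ are nonempty, closed, disjoint, and forward-invariant (f(Cᵢ) ⊆ Cᵢ). Then there exist points u ∈ C₁ and v ∈ C₂ such that (u,v) or (v,u) belongs to the closure of the orbit relation of f; i.e., the non-wandering graph of f is connected. -/
open Filter Metric Set Topology

/-- The orbit relation of a map `f`. -/
def OrbitRel {X : Type*} (f : X → X) : Set (X × X) :=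
  {p | ∃ n : ℕ, f^[n] p.1 = p.2}

/-- The ω-limit set of `x` under `f`: the set of limit points of the sequence `f^[n] x`. -/
def OmegaSet {X : Type*} [TopologicalSpace X] (f : X → X) (x : X) : Set X :=
  {z | MapClusterPt z atTop fun n : ℕ => f^[n] x}

/-- `Q` is a compact global trapping region for `f`. -/
def IsCompactGlobalTrapping {X : Type*} [MetricSpace X] (f : X → X) (Q : Set X) : Prop :=
  Q.Nonempty ∧ IsCompact Q ∧ Set.MapsTo f Q Q ∧
  (∀ x : X, (OmegaSet f x).Nonempty ∧ OmegaSet f x ⊆ Q) ∧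
  ∃ η > (0 : ℝ), ∀ ε : ℝ, 0 < ε → ε < η → ∀ δ : ℝ, 0 < δ → δ < η → ∃ N : ℕ,
    ∀ z : X, Metric.infDist z Q ≤ δ → ∀ n ≥ N, Metric.infDist (f^[n] z) Q ≤ ε

/-- `x` is a non-wandering point of `f`. -/
def NonWanderingPt {X : Type*} [MetricSpace X] (f : X → X) (x : X) : Prop :=
  ∀ ε > (0 : ℝ), ∃ z : X, ∃ n ≥ 1, dist z x ≤ ε ∧ dist (f^[n] z) x ≤ ε

lemma omega_freq {X : Type*} [MetricSpace X] {f : X → X} {x z : X}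
    (hz : z ∈ OmegaSet f x) {ε : ℝ} (hε : 0 < ε) :
    ∃ᶠ n in atTop, dist (f^[n] x) z < ε := by
  have := (mapClusterPt_iff_frequently.1 hz) (Metric.ball z ε) (Metric.ball_mem_nhds z hε)
  simpa [Metric.mem_ball] using this

lemma omega_nonwandering {X : Type*} [MetricSpace X] {f : X → X} {x z : X}
    (hz : z ∈ OmegaSet f x) : NonWanderingPt f z := by
  intro ε hε
  obtain ⟨n, -, hn⟩ := frequently_atTop.1 (omega_freq hz hε) 0
  obtain ⟨m, hm, hmd⟩ := frequently_atTop.1 (omega_freq hz hε) (n + 1)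
  refine ⟨f^[n] x, m - n, by omega, hn.le, ?_⟩
  rw [← Function.iterate_add_apply, Nat.sub_add_cancel (by omega)]
  exact hmd.le

lemma omega_in_closed {X : Type*} [MetricSpace X] {f : X → X} {C : Set X}
    (hC : IsClosed C) (hinv : Set.MapsTo f C C) {x z : X} (hx : x ∈ C)
    (hz : z ∈ OmegaSet f x) : z ∈ C := by
  by_contra h
  obtain ⟨n, hn⟩ := ((mapClusterPt_iff_frequently.1 hz) Cᶜ (hC.isOpen_compl.mem_nhds h)).exists
  exact hn (hinv.iterate n hx)

lemma key {X : Type*} [MetricSpace X] {f : X → X} (hf : Continuous f)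
    {Q : Set X} (hQc : IsCompact Q) (hω : ∀ y : X, OmegaSet f y ⊆ Q)
    {D : Set X} (hD : IsClosed D) {x u : X} (hu : u ∈ OmegaSet f x)
    (hx : x ∈ closure {y : X | (OmegaSet f y ∩ D).Nonempty}) :
    ∃ v ∈ D, (u, v) ∈ closure (OrbitRel f) := by
  obtain ⟨w, hw, hwx⟩ := mem_closure_iff_seq_limit.1 hx
  choose vk hvk1 hvk2 using hw
  obtain ⟨v, hvQ, φ, hφ, hvlim⟩ := hQc.tendsto_subseq (fun k => hω _ (hvk1 k))
  have hvD : v ∈ D := hD.mem_of_tendsto hvlim (Eventually.of_forall fun k => hvk2 (φ k))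
  refine ⟨v, hvD, ?_⟩
  rw [Metric.mem_closure_iff]
  intro ε hε
  obtain ⟨n, hn⟩ := (omega_freq hu (half_pos hε)).exists
  have hc : Tendsto (fun k => f^[n] (w (φ k))) atTop (𝓝 (f^[n] x)) :=
    ((hf.iterate n).continuousAt.tendsto).comp (hwx.comp hφ.tendsto_atTop)
  have h1 : ∀ᶠ k in atTop, dist (f^[n] (w (φ k))) (f^[n] x) < ε / 2 :=
    (Metric.tendsto_nhds.1 hc) _ (half_pos hε)
  have h2' : ∀ᶠ k in atTop, dist (vk (φ k)) v < ε / 2 :=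
    (Metric.tendsto_nhds.1 hvlim) _ (half_pos hε)
  obtain ⟨k, hk1, hk2⟩ := (h1.and h2').exists
  obtain ⟨m, hmn, hm⟩ := frequently_atTop.1 (omega_freq (hvk1 (φ k)) (half_pos hε)) n
  refine ⟨(f^[n] (w (φ k)), f^[m] (w (φ k))), ⟨m - n, ?_⟩, ?_⟩
  · show f^[m - n] (f^[n] (w (φ k))) = _
    rw [← Function.iterate_add_apply, Nat.sub_add_cancel hmn]
  · rw [Prod.dist_eq]
    refine max_lt ?_ ?_
    · rw [dist_comm]
      calc dist (f^[n] (w (φ k))) u ≤ dist (f^[n] (w (φ k))) (f^[n] x) + dist (f^[n] x) u :=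
        dist_triangle _ _ _
      _ < ε / 2 + ε / 2 := add_lt_add hk1 hn
      _ = ε := by ring
    · rw [dist_comm]
      calc dist (f^[m] (w (φ k))) v ≤ dist (f^[m] (w (φ k))) (vk (φ k)) + dist (vk (φ k)) v :=
        dist_triangle _ _ _
      _ < ε / 2 + ε / 2 := add_lt_add hm hk2
      _ = ε := by ring

/-- the non-wandering graph of a map with compact dynamics is connected. -/
theorem stmt_0 {X : Type*} [MetricSpace X] [ConnectedSpace X]
    (f : X → X) (hf : Continuous f) (Q : Set X) (hQ : IsCompactGlobalTrapping f Q)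
    (C₁ C₂ : Set X)
    (hunion : {x | NonWanderingPt f x} = C₁ ∪ C₂)
    (h1ne : C₁.Nonempty) (h2ne : C₂.Nonempty)
    (h1cl : IsClosed C₁) (h2cl : IsClosed C₂)
    (hdisj : Disjoint C₁ C₂)
    (h1inv : Set.MapsTo f C₁ C₁) (h2inv : Set.MapsTo f C₂ C₂) :
    ∃ u ∈ C₁, ∃ v ∈ C₂,
      (u, v) ∈ closure (OrbitRel f) ∨ (v, u) ∈ closure (OrbitRel f) := by
  obtain ⟨-, hQc, -, hωQ, -⟩ := hQ
  set A := {y : X | (OmegaSet f y ∩ C₁).Nonempty} with hA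
  set B := {y : X | (OmegaSet f y ∩ C₂).Nonempty} with hB
  have hcover : ∀ y : X, y ∈ A ∪ B := by
    intro y
    obtain ⟨z, hz⟩ := (hωQ y).1
    have hzn : z ∈ C₁ ∪ C₂ := by
      rw [← hunion]; exact omega_nonwandering hz
    rcases hzn with h | h
    · exact Or.inl ⟨z, hz, h⟩
    · exact Or.inr ⟨z, hz, h⟩
  have hAne : A.Nonempty := by
    obtain ⟨x, hx⟩ := h1ne
    obtain ⟨z, hz⟩ := (hωQ x).1
    exact ⟨x, z, hz, omega_in_closed h1cl h1inv hx hz⟩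
  have hBne : B.Nonempty := by
    obtain ⟨x, hx⟩ := h2ne
    obtain ⟨z, hz⟩ := (hωQ x).1
    exact ⟨x, z, hz, omega_in_closed h2cl h2inv hx hz⟩
  by_cases hAB : (A ∩ closure B).Nonempty
  · obtain ⟨x, ⟨u, hu, huC⟩, hxB⟩ := hAB
    obtain ⟨v, hvD, hcl⟩ := key hf hQc (fun y => (hωQ y).2) h2cl hu hxB
    exact ⟨u, huC, v, hvD, Or.inl hcl⟩
  by_cases hBA : (B ∩ closure A).Nonempty
  · obtain ⟨x, ⟨u, hu, huC⟩, hxA⟩ := hBA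
    obtain ⟨v, hvD, hcl⟩ := key hf hQc (fun y => (hωQ y).2) h1cl hu hxA
    exact ⟨v, hvD, u, huC, Or.inr hcl⟩
  exfalso
  rw [not_nonempty_iff_eq_empty] at hAB hBA
  have hBcA : closure A ⊆ A := by
    intro z hz
    rcases hcover z with h | h
    · exact h
    · exact absurd (Set.eq_empty_iff_forall_notMem.1 hBA z ⟨h, hz⟩) not_false
  have hAcB : closure B ⊆ B := by
    intro z hz
    rcases hcover z with h | h
    · exact absurd (Set.eq_empty_iff_forall_notMem.1 hAB z ⟨h, hz⟩) not_false
    · exact h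
  have hAclosed : IsClosed A := isClosed_of_closure_subset hBcA
  have hBclosed : IsClosed B := isClosed_of_closure_subset hAcB
  have hdisjAB : ∀ z, ¬(z ∈ A ∧ z ∈ B) := fun z hz =>
    Set.eq_empty_iff_forall_notMem.1 hAB z ⟨hz.1, subset_closure hz.2⟩
  have hAeq : A = Bᶜ := by
    apply Subset.antisymm
    · intro z hz hzB
      exact hdisjAB z ⟨hz, hzB⟩
    · intro z hz
      rcases hcover z with h | h
      · exact h
      · exact absurd h hz
  have hclopen : IsClopen A := ⟨hAclosed, hAeq ▸ hBclosed.isOpen_compl⟩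
  rcases isClopen_iff.1 hclopen with h | h
  · exact hAne.ne_empty h
  · obtain ⟨b, hb⟩ := hBne
    have : b ∈ A := h ▸ mem_univ b
    exact (hAeq ▸ this) hb
end

section
/- Let X be a connected metric space, f : X → X a continuous map with a compact global trapping region, and S a stream of f. Suppose the set R_S of S-recurrent points is written as R_S = C₁ ∪ C₂ where C₁ and C₂ are nonempty, closed, disjoint, and each is saturated under S-equivalence (if u ∈ Cᵢ and v is S-recurrent with (u,v) ∈ S and (v,u) ∈ S, then v ∈ Cᵢ). Then there exist u ∈ C₁ and v ∈ C₂ with (u,v) ∈ S or (v,u) ∈ S; i.e., the graph of every stream of a semi-flow with compact dynamics is connected. -/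
open Filter Metric Set

/-- A stream of `f`: a reflexive, transitive, closed relation containing the orbit relation. -/
def IsStream {X : Type*} [TopologicalSpace X] (f : X → X) (S : Set (X × X)) : Prop :=
  (∀ x : X, (x, x) ∈ S) ∧
  (∀ x y z : X, (x, y) ∈ S → (y, z) ∈ S → (x, z) ∈ S) ∧
  IsClosed S ∧ OrbitRel f ⊆ S

/-- `x` is an `S`-recurrent point. -/
def SRecurrent {X : Type*} (f : X → X) (S : Set (X × X)) (x : X) : Prop :=
  f x = x ∨ ∃ y ≠ x, (x, y) ∈ S ∧ (y, x) ∈ S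

open Topology

/-!
Every ω-limit set consists of S-recurrent points that are pairwise S-related both ways, so by
saturation it lies entirely in `C₁` or entirely in `C₂`. Suppose no S-relation joins `C₁` and
`C₂`. Then the basins `{x | ω(x) ⊆ Cᵢ}` cover `X`, are disjoint, and contain `Cᵢ` (as
`(u, z) ∈ S` for `z ∈ ω(u)`). By compactness of `Q` and closedness of `S` they are also closed,
which splits the connected space `X`.
-/

section OmegaLimit

variable {X : Type*} [TopologicalSpace X] {f : X → X}

theorem omegaSet_subset_of_isClosed {F : Set X} (hF : IsClosed F) {x : X}
    (hx : ∀ n, f^[n] x ∈ F) : OmegaSet f x ⊆ F :=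
  fun _ hz => hF.mem_of_mapClusterPt hz (Eventually.of_forall hx)

theorem omegaSet_iterate (f : X → X) (x : X) (n : ℕ) :
    OmegaSet f (f^[n] x) = OmegaSet f x := by
  have h : (fun m : ℕ => f^[m] (f^[n] x)) = (fun m => f^[m] x) ∘ (· + n) := by
    funext m
    simp [Function.iterate_add_apply]
  ext z
  change MapClusterPt z atTop _ ↔ MapClusterPt z atTop _
  rw [h, mapClusterPt_comp, map_add_atTop_eq_nat]

theorem mapsTo_omegaSet (hf : Continuous f) (x : X) :
    MapsTo f (OmegaSet f x) (OmegaSet f x) := by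
  intro z hz
  have h : MapClusterPt (f z) atTop (f ∘ fun n : ℕ => f^[n] x) :=
    hz.continuousAt_comp hf.continuousAt
  have hcomm : (f ∘ fun n : ℕ => f^[n] x) = fun n => f^[n] (f x) :=
    funext fun n => Function.Commute.self_iterate f n x
  rw [← omegaSet_iterate f x 1, Function.iterate_one]
  rwa [hcomm] at h

end OmegaLimit

namespace IsStream

section Topological

variable {X : Type*} [TopologicalSpace X] {f : X → X} {S : Set (X × X)}

theorem rel_of_mem_omegaSet (hS : IsStream f S) {x z : X} (hz : z ∈ OmegaSet f x) :
    (x, z) ∈ S :=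
  omegaSet_subset_of_isClosed (F := {q | (x, q) ∈ S})
    (hS.2.2.1.preimage (continuous_const.prodMk continuous_id))
    (fun n => hS.2.2.2 ⟨n, rfl⟩) hz

theorem rel_of_mem_omegaSet_of_mem_omegaSet (hS : IsStream f S) {x z z' : X}
    (hz : z ∈ OmegaSet f x) (hz' : z' ∈ OmegaSet f x) : (z, z') ∈ S :=
  omegaSet_subset_of_isClosed (F := {p | (p, z') ∈ S})
    (hS.2.2.1.preimage (continuous_id.prodMk continuous_const))
    (fun n => hS.rel_of_mem_omegaSet (by rwa [omegaSet_iterate])) hz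

theorem sRecurrent_of_mem_omegaSet (hf : Continuous f) (hS : IsStream f S) {x z : X}
    (hz : z ∈ OmegaSet f x) : SRecurrent f S z := by
  by_cases h : ∃ z' ∈ OmegaSet f x, z' ≠ z
  · obtain ⟨z', hz', hne⟩ := h
    exact Or.inr ⟨z', hne, hS.rel_of_mem_omegaSet_of_mem_omegaSet hz hz',
      hS.rel_of_mem_omegaSet_of_mem_omegaSet hz' hz⟩
  · push Not at h
    exact Or.inl (h _ (mapsTo_omegaSet hf x hz))

theorem omegaSet_subset_of_saturated (hf : Continuous f) (hS : IsStream f S) {C : Set X}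
    (hC : ∀ u ∈ C, ∀ v : X, SRecurrent f S v → (u, v) ∈ S → (v, u) ∈ S → v ∈ C)
    {x z : X} (hz : z ∈ OmegaSet f x) (hzC : z ∈ C) : OmegaSet f x ⊆ C :=
  fun _ hz' => hC z hzC _ (hS.sRecurrent_of_mem_omegaSet hf hz')
    (hS.rel_of_mem_omegaSet_of_mem_omegaSet hz hz')
    (hS.rel_of_mem_omegaSet_of_mem_omegaSet hz' hz)

theorem subset_setOf_omegaSet_subset (hS : IsStream f S)
    (hω : ∀ x, (OmegaSet f x).Nonempty) {C D : Set X}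
    (hCD : ∀ x, OmegaSet f x ⊆ C ∨ OmegaSet f x ⊆ D)
    (hno : ∀ u ∈ C, ∀ z ∈ D, (u, z) ∉ S) :
    C ⊆ {x | OmegaSet f x ⊆ C} := fun u hu =>
  (hCD u).resolve_right fun hD =>
    let ⟨z, hz⟩ := hω u
    hno u hu z (hD hz) (hS.rel_of_mem_omegaSet hz)

end Topological

section FirstCountable

variable {X : Type*} [TopologicalSpace X] [FirstCountableTopology X]
  {f : X → X} {S : Set (X × X)}

/-- A limit `a` of points `w k ∈ ω(xs k)` satisfies `(f^[n] x, a) ∈ S` for every `n`, since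
`(f^[n] (xs k), w k) ∈ S`; closedness of `S` then passes this on to all of `ω(x)`. -/
theorem exists_forall_rel_of_tendsto (hf : Continuous f) (hS : IsStream f S) {K : Set X}
    (hK : IsCompact K) {xs : ℕ → X} {x : X} (hxs : Tendsto xs atTop (𝓝 x))
    (hmeet : ∀ k, (OmegaSet f (xs k) ∩ K).Nonempty) :
    ∃ a ∈ K, ∀ z ∈ OmegaSet f x, (z, a) ∈ S := by
  choose w hwω hwK using hmeet
  obtain ⟨a, haK, φ, hφ, hwa⟩ := hK.tendsto_subseq hwK
  refine ⟨a, haK, omegaSet_subset_of_isClosed (F := {p | (p, a) ∈ S})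
    (hS.2.2.1.preimage (continuous_id.prodMk continuous_const)) fun n => ?_⟩
  have hlim : Tendsto (fun i => (f^[n] (xs (φ i)), w (φ i))) atTop (𝓝 (f^[n] x, a)) :=
    (((hf.iterate n).tendsto x).comp (hxs.comp hφ.tendsto_atTop)).prodMk_nhds hwa
  exact hS.2.2.1.mem_of_tendsto hlim (Eventually.of_forall fun i =>
    hS.rel_of_mem_omegaSet (by rw [omegaSet_iterate]; exact hwω _))

theorem isClosed_setOf_omegaSet_subset (hf : Continuous f) (hS : IsStream f S) {Q : Set X}
    (hQ : IsCompact Q) (hω : ∀ x, (OmegaSet f x).Nonempty ∧ OmegaSet f x ⊆ Q)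
    {C D : Set X} (hC : IsClosed C) (hCD : ∀ x, OmegaSet f x ⊆ C ∨ OmegaSet f x ⊆ D)
    (hno : ∀ z ∈ D, ∀ a ∈ C, (z, a) ∉ S) : IsClosed {x | OmegaSet f x ⊆ C} := by
  refine IsSeqClosed.isClosed fun xs x hxs hlim => (hCD x).resolve_right fun hD => ?_
  obtain ⟨a, haC, ha⟩ := hS.exists_forall_rel_of_tendsto hf (hQ.inter_left hC) hlim fun k =>
    let ⟨w, hw⟩ := (hω (xs k)).1
    ⟨w, hw, hxs k hw, (hω (xs k)).2 hw⟩
  obtain ⟨z, hz⟩ := (hω x).1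
  exact hno z (hD hz) a haC.1 (ha z hz)

end FirstCountable

end IsStream

/-- the graph of every stream of a semi-flow with compact dynamics
is connected. -/
theorem stmt_1 {X : Type*} [MetricSpace X] [ConnectedSpace X]
    (f : X → X) (hf : Continuous f) (Q : Set X) (hQ : IsCompactGlobalTrapping f Q)
    (S : Set (X × X)) (hS : IsStream f S)
    (C₁ C₂ : Set X)
    (hunion : {x | SRecurrent f S x} = C₁ ∪ C₂)
    (h1ne : C₁.Nonempty) (h2ne : C₂.Nonempty)
    (h1cl : IsClosed C₁) (h2cl : IsClosed C₂)
    (hdisj : Disjoint C₁ C₂)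
    (h1sat : ∀ u ∈ C₁, ∀ v : X, SRecurrent f S v → (u, v) ∈ S → (v, u) ∈ S → v ∈ C₁)
    (h2sat : ∀ u ∈ C₂, ∀ v : X, SRecurrent f S v → (u, v) ∈ S → (v, u) ∈ S → v ∈ C₂) :
    ∃ u ∈ C₁, ∃ v ∈ C₂, (u, v) ∈ S ∨ (v, u) ∈ S := by
  by_contra! hcon
  obtain ⟨-, hQc, -, hω, -⟩ := hQ
  have hne x := (hω x).1
  have hdich : ∀ x, OmegaSet f x ⊆ C₁ ∨ OmegaSet f x ⊆ C₂ := fun x => by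
    obtain ⟨z, hz⟩ := hne x
    have hz₁₂ : z ∈ C₁ ∪ C₂ := hunion ▸ hS.sRecurrent_of_mem_omegaSet hf hz
    exact hz₁₂.imp (hS.omegaSet_subset_of_saturated hf h1sat hz)
      (hS.omegaSet_subset_of_saturated hf h2sat hz)
  have hdich' x := (hdich x).symm
  have hclosed₁ : IsClosed {x | OmegaSet f x ⊆ C₁} :=
    hS.isClosed_setOf_omegaSet_subset hf hQc hω h1cl hdich
      fun z hz a ha => (hcon a ha z hz).2
  have hclosed₂ : IsClosed {x | OmegaSet f x ⊆ C₂} :=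
    hS.isClosed_setOf_omegaSet_subset hf hQc hω h2cl hdich'
      fun z hz a ha => (hcon z hz a ha).1
  have hsub₁ : C₁ ⊆ {x | OmegaSet f x ⊆ C₁} :=
    hS.subset_setOf_omegaSet_subset hne hdich fun u hu z hz => (hcon u hu z hz).1
  have hsub₂ : C₂ ⊆ {x | OmegaSet f x ⊆ C₂} :=
    hS.subset_setOf_omegaSet_subset hne hdich' fun v hv z hz => (hcon z hz v hv).2
  obtain ⟨u, hu⟩ := h1ne
  obtain ⟨v, hv⟩ := h2ne
  obtain ⟨x, -, hx₁, hx₂⟩ := isPreconnected_closed_iff.1 isPreconnected_univ _ _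
    hclosed₁ hclosed₂ (fun x _ => hdich x) ⟨u, trivial, hsub₁ hu⟩ ⟨v, trivial, hsub₂ hv⟩
  obtain ⟨z, hz⟩ := hne x
  exact disjoint_left.1 hdisj (hx₁ hz) (hx₂ hz)
end

section
/- (Auslander) Let X be a separable, locally compact, metrizable topological space and let D ⊆ X × X be a closed quasi-order on X. If (x,y) ∉ D, then there exists a continuous function L : X → ℝ such that L(a) ≥ L(b) for every (a,b) ∈ D, and L(x) < L(y). -/
/-!
Read `D` as a preorder with closed graph, `b ≤ a ↔ (a, b) ∈ D`; Lyapunov functions are then the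
continuous monotone maps. On a compact Hausdorff space the upper closure of a closed set is
closed, so Urysohn's construction can be run through open lower sets (Nachbin), and averaging
such functions over the level sets of `f` turns a function monotone on a closed set `P` into a
globally monotone one, uniformly close to `f` on `P`. Exhaust `X` by compact sets `Q n` containing
`x` and `y`, start from any function with `f x = 0`, `f y = 1`, and repeatedly make it monotone on
`Q (n + 1)` while moving it by at most `2⁻ⁿ / 8` on `Q n`. The limit is locally uniform, hence
continuous, is monotone, and moves `f x` and `f y` by at most `1 / 4`.
-/

open Set Filter Topology

theorem abs_sum_range_sub_le_one {a : ℕ → ℝ} {s : ℝ} (ha : ∀ k, a k ∈ Icc (0 : ℝ) 1)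
    (ha1 : ∀ k : ℕ, (k : ℝ) + 1 ≤ s → a k = 1) (ha0 : ∀ k : ℕ, s ≤ k → a k = 0) {m : ℕ}
    (hs0 : 0 ≤ s) (hsm : s ≤ m) : |∑ k ∈ Finset.range m, a k - s| ≤ 1 := by
  have key : ∀ n : ℕ, ((n : ℝ) ≤ ∑ k ∈ Finset.range n, a k ∨ s - 1 ≤ ∑ k ∈ Finset.range n, a k) ∧
      ∑ k ∈ Finset.range n, a k ≤ n ∧ ∑ k ∈ Finset.range n, a k ≤ s + 1 := by
    intro n
    induction n with
    | zero => simpa using (by linarith : (0 : ℝ) ≤ s + 1)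
    | succ n ih =>
      obtain ⟨hlow, hup, hup'⟩ := ih
      obtain ⟨h0, h1⟩ := ha n
      rw [Finset.sum_range_succ, Nat.cast_succ]
      rcases le_or_gt ((n : ℝ) + 1) s with hs | hs
      · rw [ha1 n hs]
        exact ⟨hlow.imp (fun _ => by linarith) (fun _ => by linarith), by linarith, by linarith⟩
      · refine ⟨Or.inr ?_, by linarith, ?_⟩
        · rcases hlow with _ | _ <;> linarith
        · rcases le_or_gt s n with hs' | _
          · rw [ha0 n hs']; linarith
          · linarith
  obtain ⟨hlow, -, hup⟩ := key m
  rw [abs_le]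
  constructor
  · rcases hlow with _ | _ <;> linarith
  · linarith

namespace Urysohns.CU

variable {T : Type*} [TopologicalSpace T] [Preorder T]

theorem monotone_approx (n : ℕ) (c : CU fun _ u : Set T => IsLowerSet u) :
    Monotone (c.approx n) := by
  induction n generalizing c with
  | zero =>
    intro x y hxy
    by_cases hx : x ∈ c.Uᶜ
    · simp only [approx, indicator_of_mem hx, indicator_of_mem (c.P_C_U.compl hxy hx),
        Pi.one_apply, le_refl]
    · simp only [approx, indicator_of_notMem hx]
      exact indicator_nonneg (fun _ _ => zero_le_one) _
  | succ n ih => exact fun x y hxy => midpoint_le_midpoint (ih _ hxy) (ih _ hxy)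

theorem monotone_lim (c : CU fun _ u : Set T => IsLowerSet u) : Monotone c.lim :=
  fun _ _ hxy => ciSup_mono (c.bddAbove_range_approx _) fun n => c.monotone_approx n hxy

end Urysohns.CU

section CompactOrderedSpace

variable {T : Type*} [TopologicalSpace T] [CompactSpace T] [Preorder T] [OrderClosedTopology T]

theorem IsClosed.isClosed_upperClosure {s : Set T} (hs : IsClosed s) :
    IsClosed (upperClosure s : Set T) := by
  have : (upperClosure s : Set T) = Prod.snd '' ({p : T × T | p.1 ≤ p.2} ∩ s ×ˢ univ) := by
    ext x
    simp [mem_upperClosure, and_comm]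
  rw [this]
  exact isClosedMap_snd_of_compactSpace _ (isClosed_le_prod.inter (hs.prod isClosed_univ))

theorem IsClosed.isClosed_lowerClosure {s : Set T} (hs : IsClosed s) :
    IsClosed (lowerClosure s : Set T) :=
  have : CompactSpace Tᵒᵈ := ‹CompactSpace T›
  IsClosed.isClosed_upperClosure (T := Tᵒᵈ) hs

theorem exists_isOpen_isLowerSet_closure_subset [T2Space T] {s u : Set T} (hs : IsClosed s)
    (hu : IsOpen u) (hu' : IsLowerSet u) (hsu : s ⊆ u) :
    ∃ v, IsOpen v ∧ IsLowerSet v ∧ s ⊆ v ∧ closure v ⊆ u := by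
  have hsu' : (lowerClosure s : Set T) ⊆ u := fun x hx => by
    obtain ⟨a, ha, hxa⟩ := mem_lowerClosure.1 hx
    exact hu' hxa (hsu ha)
  obtain ⟨w, hw, hsw, hwu⟩ := normal_exists_closure_subset hs.isClosed_lowerClosure hu hsu'
  -- the largest lower set contained in `w`
  refine ⟨(upperClosure wᶜ : Set T)ᶜ, hw.isClosed_compl.isClosed_upperClosure.isOpen_compl,
    (upperClosure wᶜ).upper.compl, fun x hx ⟨a, ha, hax⟩ => ?_,
    (closure_mono (compl_subset_comm.1 subset_upperClosure)).trans hwu⟩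
  exact ha (hsw (mem_lowerClosure.2 ⟨x, hx, hax⟩))

theorem exists_monotone_continuous_zero_one [T2Space T] {s t : Set T} (hs : IsClosed s)
    (ht : IsClosed t) (hst : ∀ a ∈ s, ∀ b ∈ t, ¬b ≤ a) :
    ∃ f : T → ℝ, Continuous f ∧ Monotone f ∧ EqOn f 0 s ∧ EqOn f 1 t ∧
      ∀ x, f x ∈ Icc (0 : ℝ) 1 := by
  let c : Urysohns.CU fun _ u : Set T => IsLowerSet u :=
    { C := s
      U := (upperClosure t : Set T)ᶜ
      P_C_U := (upperClosure t).upper.compl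
      closed_C := hs
      open_U := ht.isClosed_upperClosure.isOpen_compl
      subset := fun a ha ⟨b, hb, hba⟩ => hst a ha b hb hba
      hP := fun hc hu' hu hcu => by
        obtain ⟨v, hv, hv', hcv, hvu⟩ := exists_isOpen_isLowerSet_closure_subset hc hu hu' hcu
        exact ⟨v, hv, hcv, hvu, hv', hu'⟩ }
  exact ⟨c.lim, c.continuous_lim, c.monotone_lim, fun x hx => c.lim_of_mem_C x hx,
    fun x hx => c.lim_of_notMem_U x fun h => h (subset_upperClosure hx), c.lim_mem_Icc⟩

theorem exists_monotone_continuous_near_of_monotoneOn [T2Space T] {P : Set T} (hP : IsClosed P)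
    {f : T → ℝ} (hf : Continuous f) (hfm : MonotoneOn f P) (hf01 : MapsTo f P (Icc 0 1))
    {ε : ℝ} (hε : 0 < ε) :
    ∃ g : T → ℝ, Continuous g ∧ Monotone g ∧ (∀ x, g x ∈ Icc (0 : ℝ) 1) ∧
      ∀ x ∈ P, |g x - f x| ≤ ε := by
  obtain ⟨M, hM⟩ := exists_nat_gt ε⁻¹
  have hM0 : (0 : ℝ) < M := (inv_pos.2 hε).trans hM
  have hlevel (k : ℕ) : ∃ h : T → ℝ, Continuous h ∧ Monotone h ∧
      EqOn h 0 (P ∩ f ⁻¹' Iic (k / M)) ∧ EqOn h 1 (P ∩ f ⁻¹' Ici ((k + 1) / M)) ∧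
      ∀ x, h x ∈ Icc (0 : ℝ) 1 := by
    refine exists_monotone_continuous_zero_one (hP.inter (isClosed_Iic.preimage hf))
      (hP.inter (isClosed_Ici.preimage hf)) fun a ha b hb hba => ?_
    have hk : ((k : ℝ) + 1) / M ≤ k / M := (hb.2 : _ ≤ f b).trans ((hfm hb.1 ha.1 hba).trans ha.2)
    rw [div_le_div_iff_of_pos_right hM0] at hk
    linarith
  choose h hc hm h0 h1 h01 using hlevel
  refine ⟨fun x => (∑ k ∈ Finset.range M, h k x) / M,
    (continuous_finsetSum _ fun k _ => hc k).div_const _,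
    fun a b hab => div_le_div_of_nonneg_right (Finset.sum_le_sum fun k _ => hm k hab) hM0.le,
    fun x => ⟨div_nonneg (Finset.sum_nonneg fun k _ => (h01 k x).1) hM0.le, ?_⟩, fun x hx => ?_⟩
  · rw [div_le_one hM0]
    calc ∑ k ∈ Finset.range M, h k x ≤ ∑ _k ∈ Finset.range M, (1 : ℝ) :=
          Finset.sum_le_sum fun k _ => (h01 k x).2
      _ = M := by simp
  · obtain ⟨hfx0, hfx1⟩ := hf01 hx
    have hsum : |∑ k ∈ Finset.range M, h k x - f x * M| ≤ 1 := by
      refine abs_sum_range_sub_le_one (h01 · x) (fun k hk => h1 k ⟨hx, ?_⟩)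
        (fun k hk => h0 k ⟨hx, ?_⟩) (by positivity) (mul_le_of_le_one_left hM0.le hfx1)
      · exact (div_le_iff₀ hM0).2 hk
      · exact (le_div_iff₀ hM0).2 hk
    calc |(∑ k ∈ Finset.range M, h k x) / M - f x|
        = |∑ k ∈ Finset.range M, h k x - f x * M| / |(M : ℝ)| := by
          rw [← abs_div, sub_div, mul_div_cancel_right₀ _ hM0.ne']
      _ ≤ 1 / M := by rw [abs_of_pos hM0]; exact div_le_div_of_nonneg_right hsum hM0.le
      _ ≤ ε := by rw [one_div]; exact inv_le_of_inv_le₀ hε hM.le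

end CompactOrderedSpace

theorem exists_monotoneOn_near_of_monotoneOn {X : Type*} [TopologicalSpace X] [NormalSpace X]
    [T2Space X] [Preorder X] [OrderClosedTopology X] {K P : Set X} (hK : IsCompact K)
    (hP : IsClosed P) (hPK : P ⊆ K) {f : X → ℝ} (hf : Continuous f) (hfm : MonotoneOn f P)
    (hf01 : MapsTo f P (Icc 0 1)) {ε : ℝ} (hε : 0 < ε) :
    ∃ g : X → ℝ, Continuous g ∧ MonotoneOn g K ∧ MapsTo g K (Icc 0 1) ∧
      ∀ x ∈ P, |g x - f x| ≤ ε := by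
  have : CompactSpace K := isCompact_iff_compactSpace.1 hK
  obtain ⟨g, hgc, hgm, hg01, hgf⟩ := exists_monotone_continuous_near_of_monotoneOn (T := K)
    (hP.preimage continuous_subtype_val) (hf.comp continuous_subtype_val)
    (fun a ha b hb hab => hfm ha hb hab) (fun a ha => hf01 ha) hε
  obtain ⟨G, hG⟩ := ContinuousMap.exists_restrict_eq hK.isClosed ⟨g, hgc⟩
  have hGg (x : K) : G x = g x := DFunLike.congr_fun hG x
  refine ⟨G, G.continuous, fun a ha b hb hab => ?_, fun x hx => ?_, fun x hx => ?_⟩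
  · rw [hGg ⟨a, ha⟩, hGg ⟨b, hb⟩]
    exact hgm hab
  · rw [hGg ⟨x, hx⟩]
    exact hg01 _
  · rw [hGg ⟨x, hPK hx⟩]
    exact hgf ⟨x, hPK hx⟩ hx

theorem exists_seq_of_forall_exists_succ {α : Type*} {p : ℕ → α → Prop}
    {r : ℕ → α → α → Prop} {a : α} (ha : p 0 a) (h : ∀ n a, p n a → ∃ b, p (n + 1) b ∧ r n a b) :
    ∃ u : ℕ → α, u 0 = a ∧ ∀ n, p n (u n) ∧ r n (u n) (u (n + 1)) := by
  choose next hnext using h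
  let v (n : ℕ) : {b // p n b} := Nat.rec ⟨a, ha⟩ (fun n b => ⟨next n b b.2, (hnext n b b.2).1⟩) n
  exact ⟨fun n => (v n).1, rfl, fun n => ⟨(v n).2, (hnext n _ (v n).2).2⟩⟩

theorem exists_continuous_tendsto_of_dist_le {X α : Type*} [TopologicalSpace X]
    [PseudoMetricSpace α] [CompleteSpace α] {Q : ℕ → Set X} (hQ : Monotone Q)
    (hcover : ∀ x, ∃ n, Q n ∈ 𝓝 x) {F : ℕ → X → α} (hF : ∀ n, Continuous (F n)) {d : ℕ → ℝ}
    (hd : Summable d) (hFd : ∀ n, ∀ x ∈ Q n, dist (F n x) (F (n + 1) x) ≤ d n) :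
    ∃ L : X → α, Continuous L ∧ (∀ x, Tendsto (F · x) atTop (𝓝 (L x))) ∧
      ∀ n, ∀ x ∈ Q n, dist (F n x) (L x) ≤ ∑' k, d (k + n) := by
  have hshift (n : ℕ) {x : X} (hx : x ∈ Q n) (k : ℕ) :
      dist (F (k + n) x) (F (k + 1 + n) x) ≤ d (k + n) := by
    rw [add_right_comm]
    exact hFd _ _ (hQ (Nat.le_add_left n k) hx)
  have hlim (x : X) : ∃ a, Tendsto (F · x) atTop (𝓝 a) := by
    obtain ⟨n, hn⟩ := hcover x
    obtain ⟨a, ha⟩ := cauchySeq_tendsto_of_complete <| cauchySeq_of_dist_le_of_summable _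
      (hshift n (mem_of_mem_nhds hn)) ((summable_nat_add_iff n).2 hd)
    exact ⟨a, (tendsto_add_atTop_iff_nat n).1 ha⟩
  choose L hL using hlim
  have hLd (n : ℕ) (x : X) (hx : x ∈ Q n) : dist (F n x) (L x) ≤ ∑' k, d (k + n) := by
    simpa using dist_le_tsum_of_dist_le_of_tendsto₀ _ (hshift n hx) ((summable_nat_add_iff n).2 hd)
      ((tendsto_add_atTop_iff_nat n).2 (hL x))
  refine ⟨L, continuous_iff_continuousAt.2 fun x => ?_, hL, hLd⟩
  obtain ⟨m, hm⟩ := hcover x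
  have hunif : TendstoUniformlyOn F L atTop (Q m) := by
    refine Metric.tendstoUniformlyOn_iff.2 fun ε hε => ?_
    filter_upwards [eventually_ge_atTop m, (tendsto_sum_nat_add d).eventually (gt_mem_nhds hε)]
      with n hmn hn y hy
    rw [dist_comm]
    exact (hLd n y (hQ hmn hy)).trans_lt hn
  exact (hunif.continuousOn (Frequently.of_forall fun n => (hF n).continuousOn)).continuousAt hm

theorem exists_monotoneOn_pair_zero_one {X : Type*} [TopologicalSpace X] [NormalSpace X]
    [T1Space X] [Preorder X] {x y : X} (hxy : ¬y ≤ x) :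
    ∃ f : X → ℝ, Continuous f ∧ MonotoneOn f {x, y} ∧ MapsTo f {x, y} (Icc 0 1) ∧
      f x = 0 ∧ f y = 1 := by
  obtain ⟨f, hfx, hfy, hf01⟩ := exists_continuous_zero_one_of_isClosed
    (isClosed_singleton (x := x)) (isClosed_singleton (x := y))
    (disjoint_singleton.2 fun h => hxy h.symm.le)
  refine ⟨f, f.continuous, ?_, fun z _ => hf01 z, hfx rfl, hfy rfl⟩
  rintro a (rfl | rfl) b (rfl | rfl) hab
  · exact le_rfl
  · simp [hfx rfl, hfy rfl]
  · exact absurd hab hxy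
  · exact le_rfl

theorem exists_monotone_continuous_lt {X : Type*} [TopologicalSpace X] [T2Space X]
    [LocallyCompactSpace X] [SigmaCompactSpace X] [Preorder X] [OrderClosedTopology X] {x y : X}
    (hxy : ¬y ≤ x) : ∃ L : X → ℝ, Continuous L ∧ Monotone L ∧ L x < L y := by
  let K := (CompactExhaustion.choice X).shiftr
  let Q (n : ℕ) : Set X := {x, y} ∪ K n
  have hQ : Monotone Q := fun m n hmn => union_subset_union_right _ (K.subset hmn)
  have hQc (n : ℕ) : IsCompact (Q n) := (toFinite _).isCompact.union (K.isCompact n)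
  have hcover (z : X) : ∃ n, Q n ∈ 𝓝 z := ⟨K.find z + 1, mem_of_superset
    (mem_interior_iff_mem_nhds.1 (K.subset_interior_succ _ (K.mem_find z))) subset_union_right⟩
  have hmem (z : X) : ∀ᶠ n in atTop, z ∈ Q n :=
    let ⟨n, hn⟩ := hcover z
    eventually_atTop.2 ⟨n, fun _ hmn => hQ hmn (mem_of_mem_nhds hn)⟩
  have hQ0 : Q 0 = {x, y} := union_empty _
  obtain ⟨f, hfc, hfm, hf01, hfx, hfy⟩ := exists_monotoneOn_pair_zero_one hxy
  let d (n : ℕ) : ℝ := 1 / 4 / 2 / 2 ^ n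
  obtain ⟨F, hF0, hF⟩ := exists_seq_of_forall_exists_succ
    (p := fun n g => Continuous g ∧ MonotoneOn g (Q n) ∧ MapsTo g (Q n) (Icc 0 1))
    (r := fun n g g' => ∀ z ∈ Q n, dist (g z) (g' z) ≤ d n)
    ⟨hfc, hQ0 ▸ hfm, hQ0 ▸ hf01⟩ fun n g ⟨hgc, hgm, hg01⟩ => by
      obtain ⟨g', hg'c, hg'm, hg'01, hg'g⟩ := exists_monotoneOn_near_of_monotoneOn (hQc (n + 1))
        (hQc n).isClosed (hQ n.le_succ) hgc hgm hg01 (by positivity : 0 < d n)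
      exact ⟨g', ⟨hg'c, hg'm, hg'01⟩, fun z hz => by rw [dist_comm]; exact hg'g z hz⟩
  obtain ⟨L, hLc, hLlim, hLd⟩ := exists_continuous_tendsto_of_dist_le hQ hcover
    (fun n => (hF n).1.1) (summable_geometric_two' _) (fun n => (hF n).2)
  refine ⟨L, hLc, fun a b hab => ?_, ?_⟩
  · exact le_of_tendsto_of_tendsto (hLlim a) (hLlim b)
      (((hmem a).and (hmem b)).mono fun n hn => (hF n).1.2.1 hn.1 hn.2 hab)
  · have hsum : ∑' k, d (k + 0) = 1 / 4 := tsum_geometric_two' _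
    have hx := hLd 0 x (hQ0 ▸ mem_insert x _)
    have hy := hLd 0 y (hQ0 ▸ mem_insert_of_mem x rfl)
    rw [hsum, hF0, hfx, Real.dist_eq, abs_le] at hx
    rw [hsum, hF0, hfy, Real.dist_eq, abs_le] at hy
    linarith [hx.1, hy.2]

/-- Auslander: on a separable, locally compact, metrizable space,
any pair not in a closed quasi-order `D` is separated by a Lyapunov function of `D`. -/
theorem stmt_6 {X : Type*} [TopologicalSpace X]
    [TopologicalSpace.SeparableSpace X] [LocallyCompactSpace X]
    [TopologicalSpace.MetrizableSpace X]
    (D : Set (X × X))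
    (hrefl : ∀ x : X, (x, x) ∈ D)
    (htrans : ∀ x y z : X, (x, y) ∈ D → (y, z) ∈ D → (x, z) ∈ D)
    (hclosed : IsClosed D)
    (x y : X) (hxy : (x, y) ∉ D) :
    ∃ L : X → ℝ, Continuous L ∧ (∀ p ∈ D, L p.1 ≥ L p.2) ∧ L x < L y := by
  let : Preorder X :=
    { le := fun a b => (b, a) ∈ D
      le_refl := hrefl
      le_trans := fun a b c hab hbc => htrans c b a hbc hab }
  have : OrderClosedTopology X := ⟨hclosed.preimage continuous_swap⟩
  let := TopologicalSpace.metrizableSpaceMetric X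
  have := UniformSpace.secondCountable_of_separable X
  obtain ⟨L, hLc, hLm, hLxy⟩ := exists_monotone_continuous_lt (x := x) (y := y) hxy
  exact ⟨L, hLc, fun p hp => hLm hp, hLxy⟩
end

section
/- (Auslander) Let X be a separable, locally compact, metrizable topological space and let D ⊆ X × X be a closed quasi-order on X. Then for all x, y ∈ X: (x,y) ∈ D if and only if L(x) ≥ L(y) for every continuous function L : X → ℝ satisfying L(a) ≥ L(b) for all (a,b) ∈ D. In other words, D is completely determined by its set of Lyapunov functions: D = D_{L_D}. -/
/-!
Call `s` a down-set of the closed preorder `D` when `D.image s ⊆ s`, an up-set when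
`D.preimage s ⊆ s`. On a locally compact σ-compact space, a closed down-set `F` and a disjoint
closed up-set `G` have disjoint open down- and up-neighbourhoods (Nachbin normality): along a
compact exhaustion `K n` one grows compact sets `A n`, `B n` such that the interior of `A (n + 1)`
contains `A n` and `(D.image (A n) ∪ F) ∩ K n` (dually for `B`), while no `D`-arrow leads from
`A n ∪ F` to `B n ∪ G`; the tube lemma preserves this invariant. Normality is exactly what the
Urysohn construction `Urysohns.CU` needs to run through open down-sets, and the resulting
continuous function is antitone along `D`. Started from the down-set of `x` inside the complement
of the up-set of `y`, it equals `0` at `x` and `1` at `y` whenever `(x, y) ∉ D`.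
-/

open Set Filter

namespace Urysohns.CU

variable {X : Type*} [TopologicalSpace X] {D : SetRel X X} {P : Set X → Set X → Prop}

theorem approx_le_approx_of_rel (hdown : ∀ {c u}, P c u → D.image u ⊆ u) (c : CU P) (n : ℕ)
    {a b : X} (hab : (a, b) ∈ D) : c.approx n b ≤ c.approx n a := by
  induction n generalizing c with
  | zero =>
    by_cases ha : a ∈ c.U
    · have hb : b ∈ c.U := hdown c.P_C_U ⟨a, ha, hab⟩
      simp [approx, ha, hb]
    · exact (c.approx_of_notMem_U 0 ha).symm ▸ c.approx_le_one 0 b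
  | succ n ih => exact midpoint_le_midpoint (ih c.left) (ih c.right)

theorem lim_le_lim_of_rel (hdown : ∀ {c u}, P c u → D.image u ⊆ u) (c : CU P)
    {a b : X} (hab : (a, b) ∈ D) : c.lim b ≤ c.lim a :=
  ciSup_mono (c.bddAbove_range_approx a) fun n => c.approx_le_approx_of_rel hdown n hab

end Urysohns.CU

theorem monotone_of_subset_interior_succ {X : Type*} [TopologicalSpace X] {A : ℕ → Set X}
    (hA : ∀ n, A n ⊆ interior (A (n + 1))) : Monotone A :=
  monotone_nat_of_le_succ fun n => (hA n).trans interior_subset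

namespace SetRel

variable {X : Type*} {D : SetRel X X}

theorem preimage_compl_subset_compl_iff {s : Set X} :
    D.preimage sᶜ ⊆ sᶜ ↔ D.image s ⊆ s := by
  constructor
  · intro h b ⟨a, ha, hab⟩
    by_contra hb
    exact h ⟨b, hb, hab⟩ ha
  · intro h a ⟨b, hb, hab⟩ ha
    exact hb (h ⟨a, ha, hab⟩)

theorem image_prod_preimage_subset_compl [D.IsTrans] {s t : Set X} (h : s ×ˢ t ⊆ Dᶜ) :
    D.image s ×ˢ D.preimage t ⊆ Dᶜ := by
  rintro ⟨a', b'⟩ ⟨⟨a, ha, haa'⟩, ⟨b, hb, hb'b⟩⟩ hab'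
  exact h ⟨ha, hb⟩ (D.trans (D.trans haa' hab') hb'b)

variable [TopologicalSpace X]

theorem exists_compact_thickening [LocallyCompactSpace X] [D.IsRefl] (hD : IsClosed D)
    {A B F G : Set X} (hA : IsCompact A) (hB : IsCompact B)
    (hF : IsClosed F) (hFD : D.image F ⊆ F) (hG : IsClosed G) (hGD : D.preimage G ⊆ G)
    (hsep : (A ∪ F) ×ˢ (B ∪ G) ⊆ Dᶜ) :
    ∃ A' B', IsCompact A' ∧ IsCompact B' ∧ A ⊆ interior A' ∧ B ⊆ interior B' ∧
      (A' ∪ F) ×ˢ (B' ∪ G) ⊆ Dᶜ := by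
  obtain ⟨U, V, hU, hV, hAU, hBV, hUV⟩ := generalized_tube_lemma hA hB hD.isOpen_compl
    ((prod_mono subset_union_left subset_union_left).trans hsep)
  have hAG : A ⊆ Gᶜ := fun a ha haG =>
    hsep ⟨subset_union_left ha, subset_union_right haG⟩ (D.refl a)
  have hBF : B ⊆ Fᶜ := fun b hb hbF =>
    hsep ⟨subset_union_right hbF, subset_union_left hb⟩ (D.refl b)
  obtain ⟨A', hA', hAA', hA'U⟩ :=
    exists_compact_between hA (hU.inter hG.isOpen_compl) (subset_inter hAU hAG)
  obtain ⟨B', hB', hBB', hB'V⟩ :=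
    exists_compact_between hB (hV.inter hF.isOpen_compl) (subset_inter hBV hBF)
  refine ⟨A', B', hA', hB', hAA', hBB', ?_⟩
  rintro ⟨a, b⟩ ⟨ha | ha, hb | hb⟩ hab
  · exact hUV ⟨(hA'U ha).1, (hB'V hb).1⟩ hab
  · exact (hA'U ha).2 (hGD ⟨b, hb, hab⟩)
  · exact (hB'V hb).2 (hFD ⟨a, ha, hab⟩)
  · exact hsep ⟨subset_union_right ha, subset_union_right hb⟩ hab

theorem exists_compact_absorbing_image [LocallyCompactSpace X] [D.IsRefl] [D.IsTrans]
    (hD : IsClosed D) {A B F G K : Set X} (hA : IsCompact A) (hB : IsCompact B) (hK : IsCompact K)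
    (hF : IsClosed F) (hFD : D.image F ⊆ F) (hG : IsClosed G) (hGD : D.preimage G ⊆ G)
    (hsep : (A ∪ F) ×ˢ (B ∪ G) ⊆ Dᶜ) :
    ∃ A' B', IsCompact A' ∧ IsCompact B' ∧ A ∪ (D.image A ∪ F) ∩ K ⊆ interior A' ∧
      B ∪ (D.preimage B ∪ G) ∩ K ⊆ interior B' ∧ (A' ∪ F) ×ˢ (B' ∪ G) ⊆ Dᶜ := by
  have hA_sub : A ∪ (D.image A ∪ F) ∩ K ∪ F ⊆ D.image (A ∪ F) := by
    rw [image_union]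
    rintro x ((hx | ⟨hx | hx, -⟩) | hx)
    exacts [.inl (self_subset_image A hx), .inl hx, .inr (self_subset_image F hx),
      .inr (self_subset_image F hx)]
  have hB_sub : B ∪ (D.preimage B ∪ G) ∩ K ∪ G ⊆ D.preimage (B ∪ G) := by
    rw [preimage_union]
    rintro x ((hx | ⟨hx | hx, -⟩) | hx)
    exacts [.inl (self_subset_preimage B hx), .inl hx, .inr (self_subset_preimage G hx),
      .inr (self_subset_preimage G hx)]
  obtain ⟨A', B', hA', hB', hAA', hBB', hsep'⟩ := exists_compact_thickening hD
    (hA.union (hK.inter_left ((hD.relImage_of_isCompact hA).union hF)))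
    (hB.union (hK.inter_left ((hD.relPreimage_of_isCompact hB).union hG))) hF hFD hG hGD
    ((prod_mono hA_sub hB_sub).trans (image_prod_preimage_subset_compl hsep))
  exact ⟨A', B', hA', hB', hAA', hBB', hsep'⟩

theorem image_iUnion_interior_subset {A K : ℕ → Set X} {F : Set X}
    (hK : ∀ x, ∀ᶠ n in atTop, x ∈ K n)
    (hA : ∀ n, A n ∪ (D.image (A n) ∪ F) ∩ K n ⊆ interior (A (n + 1))) :
    D.image (⋃ n, interior (A n)) ⊆ ⋃ n, interior (A n) ∧ F ⊆ ⋃ n, interior (A n) := by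
  have hmono := monotone_of_subset_interior_succ fun n => subset_union_left.trans (hA n)
  constructor
  · rintro b ⟨a, ha, hab⟩
    obtain ⟨n, ha⟩ := mem_iUnion.1 ha
    obtain ⟨m, hbm, hnm⟩ := ((hK b).and (eventually_ge_atTop n)).exists
    exact mem_iUnion.2 ⟨m + 1, hA m (.inr ⟨.inl ⟨a, hmono hnm (interior_subset ha), hab⟩, hbm⟩)⟩
  · intro x hx
    obtain ⟨m, hm⟩ := (hK x).exists
    exact mem_iUnion.2 ⟨m + 1, hA m (.inr ⟨.inr hx, hm⟩)⟩

theorem normal_separation [LocallyCompactSpace X] [SigmaCompactSpace X] [D.IsRefl] [D.IsTrans]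
    (hD : IsClosed D) {F G : Set X} (hF : IsClosed F) (hFD : D.image F ⊆ F)
    (hG : IsClosed G) (hGD : D.preimage G ⊆ G) (hFG : Disjoint F G) :
    ∃ U V, IsOpen U ∧ IsOpen V ∧ D.image U ⊆ U ∧ D.preimage V ⊆ V ∧ F ⊆ U ∧ G ⊆ V ∧
      Disjoint U V := by
  let Good (p : Set X × Set X) : Prop :=
    IsCompact p.1 ∧ IsCompact p.2 ∧ (p.1 ∪ F) ×ˢ (p.2 ∪ G) ⊆ Dᶜ
  have step (n : ℕ) (p : Set X × Set X) (hp : Good p) : ∃ q, Good q ∧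
      p.1 ∪ (D.image p.1 ∪ F) ∩ compactCovering X n ⊆ interior q.1 ∧
      p.2 ∪ (D.preimage p.2 ∪ G) ∩ compactCovering X n ⊆ interior q.2 := by
    obtain ⟨A', B', hA', hB', hA, hB, hsep⟩ := exists_compact_absorbing_image hD hp.1 hp.2.1
      (isCompact_compactCovering X n) hF hFD hG hGD hp.2.2
    exact ⟨(A', B'), ⟨hA', hB', hsep⟩, hA, hB⟩
  choose! next hnext_good hnext₁ hnext₂ using step
  let s (n : ℕ) : Set X × Set X := Nat.rec (∅, ∅) next n
  have hbase : Good (∅, ∅) := by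
    refine ⟨isCompact_empty, isCompact_empty, ?_⟩
    rintro ⟨a, b⟩ ⟨ha, hb⟩ hab
    simp only [empty_union] at ha hb
    exact hFG.notMem_of_mem_left (hFD ⟨a, ha, hab⟩) hb
  have hs_good (n : ℕ) : Good (s n) := by
    induction n with
    | zero => exact hbase
    | succ n ih => exact hnext_good n _ ih
  have hK (x : X) : ∀ᶠ n in atTop, x ∈ compactCovering X n :=
    let ⟨m, hm⟩ := exists_mem_compactCovering x
    eventually_atTop.2 ⟨m, fun _ hn => compactCovering_subset X hn hm⟩
  obtain ⟨hU, hFU⟩ := image_iUnion_interior_subset hK fun n => hnext₁ n (s n) (hs_good n)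
  obtain ⟨hV, hGV⟩ := image_iUnion_interior_subset (D := D.inv) hK
    fun n => hnext₂ n (s n) (hs_good n)
  refine ⟨_, _, isOpen_iUnion fun _ => isOpen_interior, isOpen_iUnion fun _ => isOpen_interior,
    hU, hV, hFU, hGV, disjoint_left.2 fun x hxU hxV => ?_⟩
  obtain ⟨m, hm⟩ := mem_iUnion.1 hxU
  obtain ⟨n, hn⟩ := mem_iUnion.1 hxV
  have hmono₁ := monotone_of_subset_interior_succ fun n =>
    subset_union_left.trans (hnext₁ n _ (hs_good n))
  have hmono₂ := monotone_of_subset_interior_succ fun n =>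
    subset_union_left.trans (hnext₂ n _ (hs_good n))
  exact (hs_good (max m n)).2.2
    ⟨.inl (hmono₁ (le_max_left m n) (interior_subset hm)),
      .inl (hmono₂ (le_max_right m n) (interior_subset hn))⟩ (D.refl x)

-- closures of down-sets need not be down-sets, so we carry a closed down-set between `c` and `u`
def DownPair (D : SetRel X X) (c u : Set X) : Prop :=
  D.image u ⊆ u ∧ ∃ C, IsClosed C ∧ D.image C ⊆ C ∧ c ⊆ C ∧ C ⊆ u

theorem DownPair.exists_open_between [LocallyCompactSpace X] [SigmaCompactSpace X] [D.IsRefl]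
    [D.IsTrans] (hD : IsClosed D) {c u : Set X} (hcu : DownPair D c u) (hu : IsOpen u) :
    ∃ v, IsOpen v ∧ c ⊆ v ∧ closure v ⊆ u ∧ DownPair D c v ∧ DownPair D (closure v) u := by
  obtain ⟨huD, C, hC, hCD, hcC, hCu⟩ := hcu
  obtain ⟨v, V, hv, hV, hvD, hVD, hCv, huV, hvV⟩ := normal_separation hD hC hCD hu.isClosed_compl
    (preimage_compl_subset_compl_iff.2 huD) (disjoint_compl_right_iff_subset.2 hCu)
  have hvV' : closure v ⊆ Vᶜ := closure_minimal hvV.subset_compl_right hV.isClosed_compl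
  have hVu : Vᶜ ⊆ u := compl_subset_comm.1 huV
  refine ⟨v, hv, hcC.trans hCv, hvV'.trans hVu, ⟨hvD, C, hC, hCD, hcC, hCv⟩,
    ⟨huD, Vᶜ, hV.isClosed_compl, ?_, hvV', hVu⟩⟩
  rw [← preimage_compl_subset_compl_iff, compl_compl]
  exact hVD

theorem exists_lyapunov_of_notMem [LocallyCompactSpace X] [SigmaCompactSpace X] [D.IsRefl]
    [D.IsTrans] (hD : IsClosed D) {x y : X}
    (hxy : (x, y) ∉ D) :
    ∃ L : X → ℝ, Continuous L ∧ (∀ p ∈ D, L p.2 ≤ L p.1) ∧ L x < L y := by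
  have hdown : D.image (D.image {x}) ⊆ D.image {x} := by
    rw [← image_comp]; exact image_subset_image_left comp_subset_self
  have hup : D.preimage (D.preimage {y}) ⊆ D.preimage {y} := by
    rw [← preimage_comp]; exact preimage_subset_preimage_left comp_subset_self
  have hsub : D.image {x} ⊆ (D.preimage {y})ᶜ := by
    rintro z ⟨_, rfl, hxz⟩ ⟨_, rfl, hzy⟩
    exact hxy (D.trans hxz hzy)
  let c : Urysohns.CU (DownPair D) :=
    { C := D.image {x}
      U := (D.preimage {y})ᶜ
      P_C_U := ⟨preimage_compl_subset_compl_iff.1 (by rwa [compl_compl]), D.image {x},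
        hD.relImage_of_isCompact isCompact_singleton, hdown, subset_rfl, hsub⟩
      closed_C := hD.relImage_of_isCompact isCompact_singleton
      open_U := (hD.relPreimage_of_isCompact isCompact_singleton).isOpen_compl
      subset := hsub
      hP := fun _ hcu hu _ => hcu.exists_open_between hD hu }
  refine ⟨c.lim, c.continuous_lim, fun p hp => c.lim_le_lim_of_rel (fun h => h.1) hp, ?_⟩
  rw [c.lim_of_mem_C x ⟨x, rfl, D.refl x⟩, c.lim_of_notMem_U y (not_not.2 ⟨y, rfl, D.refl y⟩)]
  exact zero_lt_one

end SetRel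

/-- Auslander: a closed quasi-order on a separable, locally compact,
metrizable space is completely determined by its set of Lyapunov functions. -/
theorem stmt_7 {X : Type*} [TopologicalSpace X]
    [TopologicalSpace.SeparableSpace X] [LocallyCompactSpace X]
    [TopologicalSpace.MetrizableSpace X]
    (D : Set (X × X))
    (hrefl : ∀ x : X, (x, x) ∈ D)
    (htrans : ∀ x y z : X, (x, y) ∈ D → (y, z) ∈ D → (x, z) ∈ D)
    (hclosed : IsClosed D) :
    ∀ x y : X, (x, y) ∈ D ↔
      ∀ L : X → ℝ, Continuous L → (∀ p ∈ D, L p.1 ≥ L p.2) → L x ≥ L y := by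
  let := TopologicalSpace.metrizableSpaceMetric X
  have := UniformSpace.secondCountable_of_separable X
  have : SetRel.IsRefl D := ⟨hrefl⟩
  have : SetRel.IsTrans D := ⟨fun _ _ _ => htrans _ _ _⟩
  intro x y
  refine ⟨fun hxy L _ hL => hL (x, y) hxy, fun h => ?_⟩
  by_contra hxy
  obtain ⟨L, hL, hLD, hLxy⟩ := SetRel.exists_lyapunov_of_notMem hclosed hxy
  exact (h L hL hLD).not_gt hLxy
end

section
/- Let f : X → X be a continuous map on a metric space X and let S be a stream of f that is an Ωstream, i.e., for every x ∈ X and every point y on the forward orbit of x, {z : (x,z) ∈ S} = {f^n(x) : n ≥ 0} ∪ {z : (y,z) ∈ S}. Then every node of S (equivalence class of S-recurrent points under S-equivalence) is closed in X and forward-invariant under f, and the set R_S of all S-recurrent points is closed and forward-invariant under f. -/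
open Filter Metric Set

/-- A stream `S` of `f` is an Ωstream: for every point `x` and every point `y = f^[n] x`
of its forward orbit, `Down_S(x) = O_f(x) ∪ Down_S(y)`. -/
def IsOmegaStream {X : Type*} [TopologicalSpace X] (f : X → X) (S : Set (X × X)) : Prop :=
  IsStream f S ∧
  ∀ (x : X) (n : ℕ),
    {z : X | (x, z) ∈ S} = {z : X | ∃ m : ℕ, f^[m] x = z} ∪ {z : X | (f^[n] x, z) ∈ S}

/-- The node of an `S`-recurrent point `x`: its `S`-equivalence class. -/
def SNode {X : Type*} (f : X → X) (S : Set (X × X)) (x : X) : Set X :=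
  {y | SRecurrent f S y ∧ (x, y) ∈ S ∧ (y, x) ∈ S}

lemma srec_iff {X : Type*} [MetricSpace X] (f : X → X) (S : Set (X × X))
    (hS : IsOmegaStream f S) (x : X) : SRecurrent f S x ↔ (f x, x) ∈ S := by
  obtain ⟨⟨hrefl, htrans, hclosed, horb⟩, homega⟩ := hS
  constructor
  · rintro (hfx | ⟨y, hyx, hxy, hyxS⟩)
    · rw [hfx]; exact hrefl x
    · have hy : y ∈ {z : X | (x, z) ∈ S} := hxy
      rw [homega x 1] at hy
      rcases hy with ⟨m, hm⟩ | h
      · rcases m with _ | k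
        · simp only [Function.iterate_zero_apply] at hm; exact absurd hm.symm hyx
        · have : (f x, y) ∈ S := horb ⟨k, by rw [← Function.iterate_succ_apply]; exact hm⟩
          exact htrans _ _ _ this hyxS
      · simp only [Function.iterate_one] at h
        exact htrans _ _ _ h hyxS
  · intro h
    by_cases hfx : f x = x
    · exact Or.inl hfx
    · exact Or.inr ⟨f x, hfx, horb ⟨1, rfl⟩, h⟩

lemma srec_fwd {X : Type*} [MetricSpace X] (f : X → X) (S : Set (X × X))
    (hS : IsOmegaStream f S) (x : X) (h : (f x, x) ∈ S) : (f (f x), f x) ∈ S := by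
  obtain ⟨⟨hrefl, htrans, hclosed, horb⟩, homega⟩ := hS
  have hx : x ∈ {z : X | (f x, z) ∈ S} := h
  rw [homega (f x) 1] at hx
  rcases hx with ⟨m, hm⟩ | hx
  · refine horb ⟨m, ?_⟩
    show f^[m] (f (f x)) = f x
    rw [← Function.iterate_succ_apply, Function.iterate_succ_apply', hm]
  · simp only [Function.iterate_one] at hx
    exact htrans _ _ _ hx (horb ⟨1, rfl⟩)

/-- every node of an Ωstream is closed and forward-invariant, and the set
of recurrent points of an Ωstream is closed and forward-invariant. -/
theorem stmt_18 {X : Type*} [MetricSpace X]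
    (f : X → X) (hf : Continuous f)
    (S : Set (X × X)) (hS : IsOmegaStream f S) :
    (∀ x : X, SRecurrent f S x →
      IsClosed (SNode f S x) ∧ Set.MapsTo f (SNode f S x) (SNode f S x)) ∧
    IsClosed {x : X | SRecurrent f S x} ∧
    Set.MapsTo f {x : X | SRecurrent f S x} {x : X | SRecurrent f S x} := by
  obtain ⟨⟨hrefl, htrans, hclosed, horb⟩, homega⟩ := hS
  have hS' : IsOmegaStream f S := ⟨⟨hrefl, htrans, hclosed, horb⟩, homega⟩
  have hrecset : {x : X | SRecurrent f S x} = (fun x => (f x, x)) ⁻¹' S := by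
    ext x; exact srec_iff f S hS' x
  have hrecclosed : IsClosed {x : X | SRecurrent f S x} := by
    rw [hrecset]; exact hclosed.preimage (hf.prodMk continuous_id)
  have hrecmaps : Set.MapsTo f {x : X | SRecurrent f S x} {x : X | SRecurrent f S x} := by
    intro x hx
    rw [Set.mem_setOf_eq, srec_iff f S hS'] at hx ⊢
    exact srec_fwd f S hS' x hx
  refine ⟨fun x hx => ?_, hrecclosed, hrecmaps⟩
  constructor
  · have : SNode f S x =
        {y : X | SRecurrent f S y} ∩ ((fun y => (x, y)) ⁻¹' S ∩ (fun y => (y, x)) ⁻¹' S) := by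
      ext y; simp [SNode, Set.mem_setOf_eq, and_assoc]
    rw [this]
    exact hrecclosed.inter
      ((hclosed.preimage (continuous_const.prodMk continuous_id)).inter
        (hclosed.preimage (continuous_id.prodMk continuous_const)))
  · rintro y ⟨hyrec, hxy, hyx⟩
    have hfyrec : SRecurrent f S (f y) := hrecmaps hyrec
    refine ⟨hfyrec, htrans _ _ _ hxy (horb ⟨1, rfl⟩), ?_⟩
    have : (f y, y) ∈ S := (srec_iff f S hS' y).mp hyrec
    exact htrans _ _ _ this hyx
end

section
/- Let X be a compact metric space and f : X → X a continuous map. If z ∈ X is such that for every ε > 0 there is an ε-chain from x to z, and y = f^m(x) for some m ≥ 0, then either z lies on the forward orbit of x (z = f^n(x) for some n ≥ 0) or for every ε > 0 there is an ε-chain from y to z. Consequently the infinitesimal chains stream of f is an Ωstream. -/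
/-- An `ε`-chain for `f` from `x` to `y`. -/
def HasChain {X : Type*} [MetricSpace X] (f : X → X) (ε : ℝ) (x y : X) : Prop :=
  ∃ k : ℕ, 1 ≤ k ∧ ∃ z : ℕ → X, z 0 = x ∧ z k = y ∧
    ∀ i < k, dist (f (z i)) (z (i + 1)) ≤ ε

/-!
If `z` is off the orbit of `x`, it keeps a positive distance from `x, f x, …, f^[m] x`.
By continuity, a sufficiently fine chain from `x` shadows this finite piece of orbit, so it
cannot reach `z` within `m` steps. Dropping its first `m` steps and replacing its `m`-th
point by `f^[m] x` gives an `ε`-chain from `f^[m] x` to `z`: the first jump is small because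
the `(m + 1)`-st point of the chain is close to `f^[m + 1] x`.
-/

open Filter Topology

lemma Continuous.eventually_dist_chain_iterate_lt {X : Type*} [PseudoMetricSpace X]
    {f : X → X} (hf : Continuous f) (x : X) (n : ℕ) {ε : ℝ} (hε : 0 < ε) :
    ∀ᶠ δ in 𝓝[>] (0 : ℝ), ∀ c : ℕ → X, c 0 = x →
      (∀ i < n, dist (f (c i)) (c (i + 1)) ≤ δ) → dist (c n) (f^[n] x) < ε := by
  induction n generalizing ε with
  | zero => exact .of_forall fun _ c hc0 _ => by simpa [hc0] using hε
  | succ n ih =>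
    obtain ⟨η, hη, hfη⟩ := Metric.continuousAt_iff.1 hf.continuousAt (ε / 2) (half_pos hε)
    filter_upwards [ih hη, Ioo_mem_nhdsGT (half_pos hε)] with δ hshadow hδ c hc0 hc
    have hjump : dist (c (n + 1)) (f (c n)) ≤ ε / 2 := by
      rw [dist_comm]
      exact (hc n n.lt_succ_self).trans hδ.2.le
    have hnear : dist (f (c n)) (f^[n + 1] x) < ε / 2 := by
      rw [Function.iterate_succ_apply']
      exact hfη (hshadow c hc0 fun i hi => hc i (by omega))
    calc dist (c (n + 1)) (f^[n + 1] x)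
        ≤ dist (c (n + 1)) (f (c n)) + dist (f (c n)) (f^[n + 1] x) := dist_triangle _ _ _
      _ < ε / 2 + ε / 2 := add_lt_add_of_le_of_lt hjump hnear
      _ = ε := add_halves ε

lemma hasChain_of_restart {X : Type*} [MetricSpace X] {f : X → X} {ε : ℝ} {c : ℕ → X}
    {m k : ℕ} (hmk : m < k) {y : X} (hy : dist (f y) (c (m + 1)) ≤ ε)
    (hc : ∀ i < k, m < i → dist (f (c i)) (c (i + 1)) ≤ ε) :
    HasChain f ε y (c k) := by
  refine ⟨k - m, by omega, fun j => if j = 0 then y else c (m + j), rfl, ?_, ?_⟩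
  · simp only [show k - m ≠ 0 by omega, if_false, show m + (k - m) = k by omega]
  · rintro (_ | j) hj
    · simpa using hy
    · have hstep := hc (m + (j + 1)) (by omega) (by omega)
      simpa [show m + (j + 1 + 1) = m + (j + 1) + 1 by omega] using hstep

theorem stmt_19_general {X : Type*} [MetricSpace X]
    (f : X → X) (hf : Continuous f)
    (x z : X) (hchain : ∀ ε > (0 : ℝ), HasChain f ε x z) (m : ℕ) :
    (∃ n : ℕ, f^[n] x = z) ∨ ∀ ε > (0 : ℝ), HasChain f ε (f^[m] x) z := by
  refine or_iff_not_imp_left.2 fun hz ε hε => ?_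
  push Not at hz
  have hfar := (eventually_all_finset (Finset.range (m + 1))).2 fun i _ =>
    hf.eventually_dist_chain_iterate_lt x i (dist_pos.2 (hz i).symm)
  have hsmall : ∀ᶠ δ in 𝓝[>] (0 : ℝ), δ ∈ Set.Ioo 0 ε := Ioo_mem_nhdsGT hε
  obtain ⟨δ, ⟨hδ, hδε⟩, hshadow, hfar⟩ := (hsmall.and
    ((hf.eventually_dist_chain_iterate_lt x (m + 1) hε).and hfar)).exists
  obtain ⟨k, -, c, hc0, rfl, hc⟩ := hchain δ hδ
  have hmk : m < k := by
    by_contra! hkm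
    exact lt_irrefl _ (hfar k (by simpa [Nat.lt_succ_iff] using hkm) c hc0 hc)
  refine hasChain_of_restart hmk ?_ fun i hi _ => (hc i hi).trans hδε.le
  rw [dist_comm, ← Function.iterate_succ_apply' f m x]
  exact (hshadow c hc0 fun i hi => hc i (by omega)).le

/-- on a compact metric space, if there are `ε`-chains from `x` to `z`
for every `ε > 0` and `y = f^[m] x` is on the forward orbit of `x`, then either `z` is
on the forward orbit of `x` or there are `ε`-chains from `y` to `z` for every `ε > 0`.
Consequently the infinitesimal chains stream of `f` is an Ωstream. -/
theorem stmt_19 {X : Type*} [MetricSpace X] [CompactSpace X]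
    (f : X → X) (hf : Continuous f)
    (x z : X) (hchain : ∀ ε > (0 : ℝ), HasChain f ε x z) (m : ℕ) :
    (∃ n : ℕ, f^[n] x = z) ∨ ∀ ε > (0 : ℝ), HasChain f ε (f^[m] x) z :=
  stmt_19_general f hf x z hchain m
end
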